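/- Let n ≥ 2 and k ≥ 0 be integers, let m ∈ ℤ^n, and assume m lies in wt B(kθ) but not in wt B((k−1)θ). Set m' = m + e_1. Then: (i) m' lies in wt B((k+1)θ) but not in wt B(kθ) if and only if m_1 ≥ 0; (ii) m' lies in wt B((k−1)θ) but not in wt B((k−2)θ) if and only if m_1 < 0. -/
import Mathlib


/-- Type `Bₙ` weight membership: `m ∈ wt B(kθ)` (θ = e₁); empty for `k < 0`. -/
def wtB (n : ℕ) (k : ℤ) (m : Fin n → ℤ) : Prop :=
  0 ≤ k ∧ ∃ τ : Equiv.Perm (Fin n), ∃ ε : Fin n → ℤ,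
    (∀ j, ε j = 1 ∨ ε j = -1) ∧
    (∀ i j : Fin n, i ≤ j → ε j * m (τ j) ≤ ε i * m (τ i)) ∧
    (∀ j, 0 ≤ ε j * m (τ j)) ∧
    (∀ i : ℕ, 1 ≤ i → i ≤ n →
      ∑ j ∈ Finset.univ.filter (fun j : Fin n => (j : ℕ) < i), ε j * m (τ j) ≤ k)

lemma wtB_iff (n : ℕ) (hn : 1 ≤ n) (k : ℤ) (m : Fin n → ℤ) :
    wtB n k m ↔ ∑ j, |m j| ≤ k := by
  constructor
  · rintro ⟨hk, τ, ε, hε, hmono, hnn, hsum⟩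
    have h1 := hsum n (by omega) le_rfl
    have hfilter : Finset.univ.filter (fun j : Fin n => (j : ℕ) < n) = Finset.univ := by
      ext j; simp [j.isLt]
    rw [hfilter] at h1
    calc ∑ j, |m j| = ∑ j, |m (τ j)| := (Equiv.sum_comp τ fun j => |m j|).symm
      _ = ∑ j, ε j * m (τ j) := by
          refine Finset.sum_congr rfl fun j _ => ?_
          have hj := hnn j
          rcases hε j with h | h
          · rw [h] at hj ⊢
            rw [one_mul] at hj ⊢
            exact abs_of_nonneg hj
          · rw [h] at hj ⊢
            rw [neg_one_mul] at hj ⊢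
            rw [abs_of_nonpos (by linarith)]
      _ ≤ k := h1
  · intro hS
    have h0 : (0 : ℤ) ≤ ∑ j, |m j| := Finset.sum_nonneg fun j _ => abs_nonneg _
    set σ := Tuple.sort (fun j => -|m j|) with hσ
    refine ⟨by omega, σ, fun j => if 0 ≤ m (σ j) then 1 else -1, fun j => by dsimp only; split <;> simp,
      ?_, ?_, ?_⟩
    · intro i j hij
      have hm := Tuple.monotone_sort (fun j => -|m j|) hij
      simp only [Function.comp] at hm
      have : |m (σ j)| ≤ |m (σ i)| := by
        have := hm
        simp only [← hσ] at this
        linarith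
      have e1 : (if 0 ≤ m (σ i) then (1:ℤ) else -1) * m (σ i) = |m (σ i)| := by
        split <;> rename_i h'
        · rw [one_mul, abs_of_nonneg h']
        · rw [neg_one_mul, abs_of_neg (lt_of_not_ge h')]
      have e2 : (if 0 ≤ m (σ j) then (1:ℤ) else -1) * m (σ j) = |m (σ j)| := by
        split <;> rename_i h'
        · rw [one_mul, abs_of_nonneg h']
        · rw [neg_one_mul, abs_of_neg (lt_of_not_ge h')]
      rw [e1, e2]; exact this
    · intro j
      dsimp only
      split <;> rename_i h'
      · rw [one_mul]; exact h'
      · rw [neg_one_mul]; linarith [lt_of_not_ge h']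
    · intro i _ _
      have heq : ∀ j : Fin n, (if 0 ≤ m (σ j) then (1:ℤ) else -1) * m (σ j) = |m (σ j)| := by
        intro j; split <;> rename_i h'
        · rw [one_mul, abs_of_nonneg h']
        · rw [neg_one_mul, abs_of_neg (lt_of_not_ge h')]
      calc ∑ j ∈ Finset.univ.filter (fun j : Fin n => (j : ℕ) < i),
            (if 0 ≤ m (σ j) then (1:ℤ) else -1) * m (σ j)
          = ∑ j ∈ Finset.univ.filter (fun j : Fin n => (j : ℕ) < i), |m (σ j)| :=
            Finset.sum_congr rfl fun j _ => heq j
        _ ≤ ∑ j, |m (σ j)| :=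
            Finset.sum_le_sum_of_subset_of_nonneg (Finset.filter_subset _ _)
              (fun j _ _ => abs_nonneg _)
        _ = ∑ j, |m j| := Equiv.sum_comp σ fun j => |m j|
        _ ≤ k := hS

theorem statement_5 (n : ℕ) (hn : 2 ≤ n) (k : ℤ) (hk : 0 ≤ k)
    (m : Fin n → ℤ)
    (h : wtB n k m ∧ ¬ wtB n (k - 1) m)
    (m' : Fin n → ℤ)
    (hm' : ∀ j, m' j = m j + (if (j : ℕ) = 0 then 1 else 0)) :
    ((wtB n (k + 1) m' ∧ ¬ wtB n k m') ↔ 0 ≤ m ⟨0, by omega⟩) ∧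
    ((wtB n (k - 1) m' ∧ ¬ wtB n (k - 2) m') ↔ m ⟨0, by omega⟩ < 0) := by
  have hn1 : 1 ≤ n := by omega
  set i0 : Fin n := ⟨0, by omega⟩ with hi0
  obtain ⟨h1, h2⟩ := h
  rw [wtB_iff n hn1] at h1
  rw [wtB_iff n hn1] at h2
  push_neg at h2
  have hSk : ∑ j, |m j| = k := by omega
  -- sum decomposition
  have hmem : i0 ∈ Finset.univ := Finset.mem_univ _
  have hdec1 : ∑ j ∈ Finset.univ.erase i0, |m j| + |m i0| = ∑ j, |m j| :=
    Finset.sum_erase_add _ _ hmem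
  have hdec2 : ∑ j ∈ Finset.univ.erase i0, |m' j| + |m' i0| = ∑ j, |m' j| :=
    Finset.sum_erase_add _ _ hmem
  have hsame : ∑ j ∈ Finset.univ.erase i0, |m' j| = ∑ j ∈ Finset.univ.erase i0, |m j| := by
    refine Finset.sum_congr rfl fun j hj => ?_
    have hj0 : (j : ℕ) ≠ 0 := by
      intro hc
      exact (Finset.mem_erase.mp hj).1 (Fin.ext hc)
    rw [hm' j, if_neg hj0, add_zero]
  have hm'0 : m' i0 = m i0 + 1 := by
    rw [hm' i0]; simp [hi0]
  rw [wtB_iff n hn1, wtB_iff n hn1, wtB_iff n hn1, wtB_iff n hn1]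
  rcases le_or_gt 0 (m i0) with hpos | hneg
  · have habs : |m' i0| = |m i0| + 1 := by
      rw [hm'0, abs_of_nonneg (by omega), abs_of_nonneg hpos]
    have hS' : ∑ j, |m' j| = k + 1 := by omega
    constructor
    · constructor
      · intro _; exact hpos
      · intro _; constructor <;> omega
    · constructor
      · rintro ⟨ha, _⟩; omega
      · intro hc; omega
  · have habs : |m' i0| = |m i0| - 1 := by
      rw [hm'0, abs_of_nonpos (by omega), abs_of_neg hneg]; ring
    have hS' : ∑ j, |m' j| = k - 1 := by omega
    constructor
    · constructor
      · rintro ⟨_, hb⟩; omega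
      · intro hc; omega
    · constructor
      · intro _; exact hneg
      · intro _; constructor <;> omega
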